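/- arXiv:1512.00759 — 3 statements merged into one kernel-verified Lean document; each statement's English description precedes it below -/
import Mathlib

section
/- Let ϑ, δ₁₁, δ₂₂, β₁, β₂ : [0,1] → ℝ and δ₁₂ : [0,1] → ℂ be continuously differentiable, with ϑ(x) ≠ 0 for all x ∈ [0,1] and δ₁₁(1) ≠ 0. Let λ ∈ ℝ with λ ≠ λ_{1,1} := δ₂₂(1) − |δ₁₂(1)|²/δ₁₁(1). Then there exists t₀ < 1 such that for all t ∈ (t₀,1) the matrix D(t) − λI is invertible, and, as t ↗ 1, π(t,λ) → π₀(λ) and (π(t,λ) − π₀(λ))/(t−1) → π₁(λ), where π₀(λ) = (Φ(1) − Ψ(1)·λ) / ( δ₁₁(1)δ₂₂(1) − |δ₁₂(1)|² − λ·δ₁₁(1) ) and π₁(λ) = ( Φ′(1) − Ψ′(1)·λ − π₀(λ)·ξ′(1) ) / ( δ₁₁(1)δ₂₂(1) − |δ₁₂(1)|² − λ·δ₁₁(1) ), with ξ(t) := δ₁₁(t)δ₂₂(t) − |δ₁₂(t)|² − λ·δ₁₁(t). In particular, π(t,λ) = π₀(λ) + π₁(λ)(t−1) + o(1−t) as t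 ↗ 1. -/
open Matrix Filter Topology Asymptotics

/-- The Hermitian `2×2` matrix `D(t)` of Example B:
`D(t)₁₁ = δ₁₁(t)/(1-t)²`, `D(t)₁₂ = δ₁₂(t)/(1-t)`, `D(t)₂₁ = conj δ₁₂(t)/(1-t)`,
`D(t)₂₂ = δ₂₂(t)`. -/
noncomputable def DB (δ11 δ22 : ℝ → ℝ) (δ12 : ℝ → ℂ) (t : ℝ) :
    Matrix (Fin 2) (Fin 2) ℂ :=
  !![(δ11 t : ℂ) / ((1 - t : ℝ) : ℂ) ^ 2, δ12 t / ((1 - t : ℝ) : ℂ);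
     (starRingEnd ℂ) (δ12 t) / ((1 - t : ℝ) : ℂ), (δ22 t : ℂ)]

/-- The vector `b(t) = -i·(β₁(t)/(1-t), β₂(t))ᵗ ∈ ℂ²` of Example B. -/
noncomputable def bB (b1 b2 : ℝ → ℝ) (t : ℝ) : Fin 2 → ℂ :=
  ![-Complex.I * ((b1 t : ℂ) / ((1 - t : ℝ) : ℂ)), -Complex.I * (b2 t : ℂ)]

/-- `π(t,λ) = ϑ(t) - b(t)*(D(t)-λ)⁻¹ b(t)`. -/
noncomputable def piB (ϑ δ11 δ22 b1 b2 : ℝ → ℝ) (δ12 : ℝ → ℂ) (lam t : ℝ) : ℂ :=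
  (ϑ t : ℂ) -
    star (bB b1 b2 t) ⬝ᵥ ((DB δ11 δ22 δ12 t - (lam : ℂ) • 1)⁻¹ *ᵥ bB b1 b2 t)

/-- `Ψ(t) = (ϑδ₁₁ - β₁²)(t) + (1-t)²·(ϑδ₂₂ - β₂²)(t)`. -/
def PsiB (ϑ δ11 δ22 b1 b2 : ℝ → ℝ) (t : ℝ) : ℝ :=
  (ϑ t * δ11 t - (b1 t) ^ 2) + (1 - t) ^ 2 * (ϑ t * δ22 t - (b2 t) ^ 2)

/-- `Φ(t) = ϑ(t)⁻¹·[(ϑδ₁₁ - β₁²)(t)·(ϑδ₂₂ - β₂²)(t) - |(ϑδ₁₂ - β₁β₂)(t)|²]`. -/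
noncomputable def PhiB (ϑ δ11 δ22 b1 b2 : ℝ → ℝ) (δ12 : ℝ → ℂ) (t : ℝ) : ℝ :=
  (1 / ϑ t) * ((ϑ t * δ11 t - (b1 t) ^ 2) * (ϑ t * δ22 t - (b2 t) ^ 2) -
    Complex.normSq ((ϑ t : ℂ) * δ12 t - (b1 t : ℂ) * (b2 t : ℂ)))

/-- `ξ(t) = δ₁₁(t)δ₂₂(t) - |δ₁₂(t)|² - λ·δ₁₁(t)`. -/
noncomputable def xiB (δ11 δ22 : ℝ → ℝ) (δ12 : ℝ → ℂ) (lam t : ℝ) : ℝ :=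
  δ11 t * δ22 t - Complex.normSq (δ12 t) - lam * δ11 t

/-- `π₀(λ) = (Φ(1) - Ψ(1)·λ) / (δ₁₁(1)δ₂₂(1) - |δ₁₂(1)|² - λδ₁₁(1))`. -/
noncomputable def pi0B (ϑ δ11 δ22 b1 b2 : ℝ → ℝ) (δ12 : ℝ → ℂ) (lam : ℝ) : ℝ :=
  (PhiB ϑ δ11 δ22 b1 b2 δ12 1 - PsiB ϑ δ11 δ22 b1 b2 1 * lam) /
    (δ11 1 * δ22 1 - Complex.normSq (δ12 1) - lam * δ11 1)

/-- `π₁(λ) = (Φ'(1) - Ψ'(1)·λ - π₀(λ)·ξ'(1)) / (δ₁₁(1)δ₂₂(1) - |δ₁₂(1)|² - λδ₁₁(1))`,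
with one-sided derivatives at `1` taken within `[0,1]`. -/
noncomputable def pi1B (ϑ δ11 δ22 b1 b2 : ℝ → ℝ) (δ12 : ℝ → ℂ) (lam : ℝ) : ℝ :=
  (derivWithin (PhiB ϑ δ11 δ22 b1 b2 δ12) (Set.Icc 0 1) 1 -
      derivWithin (PsiB ϑ δ11 δ22 b1 b2) (Set.Icc 0 1) 1 * lam -
      pi0B ϑ δ11 δ22 b1 b2 δ12 lam * derivWithin (xiB δ11 δ22 δ12 lam) (Set.Icc 0 1) 1) /
    (δ11 1 * δ22 1 - Complex.normSq (δ12 1) - lam * δ11 1)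

/-- auxiliary: real "denominator" function. -/
def GB (δ11 δ22 : ℝ → ℝ) (δ12 : ℝ → ℂ) (lam t : ℝ) : ℝ :=
  δ11 t * δ22 t - Complex.normSq (δ12 t) - lam * δ11 t - lam * (1 - t) ^ 2 * (δ22 t - lam)

/-- auxiliary: real "numerator" function. -/
noncomputable def FB (ϑ δ11 δ22 b1 b2 : ℝ → ℝ) (δ12 : ℝ → ℂ) (lam t : ℝ) : ℝ :=
  PhiB ϑ δ11 δ22 b1 b2 δ12 t - lam * PsiB ϑ δ11 δ22 b1 b2 t + lam ^ 2 * (1 - t) ^ 2 * ϑ t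

lemma matA (δ11 δ22 : ℝ → ℝ) (δ12 : ℝ → ℂ) (lam t : ℝ) :
    DB δ11 δ22 δ12 t - (lam : ℂ) • 1 =
      !![(δ11 t : ℂ) / ((1 - t : ℝ) : ℂ) ^ 2 - lam, δ12 t / ((1 - t : ℝ) : ℂ);
         (starRingEnd ℂ) (δ12 t) / ((1 - t : ℝ) : ℂ), (δ22 t : ℂ) - lam] := by
  ext i j
  fin_cases i <;> fin_cases j <;> simp [DB, Matrix.one_apply, Matrix.smul_apply]

lemma det_aux (a d lam u c : ℂ) (hu : u ≠ 0) :
    (a / u ^ 2 - lam) * (d - lam) - c / u * ((starRingEnd ℂ) c / u) =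
      (a * d - c * (starRingEnd ℂ) c - lam * a - lam * u ^ 2 * (d - lam)) / u ^ 2 := by
  field_simp
  ring

lemma one_sub_ne (t : ℝ) (ht : t < 1) : ((1 - t : ℝ) : ℂ) ≠ 0 := by
  simpa using sub_ne_zero.mpr (by exact_mod_cast ht.ne' : (1 : ℂ) ≠ (t : ℂ))

lemma detB (δ11 δ22 : ℝ → ℝ) (δ12 : ℝ → ℂ) (lam t : ℝ) (ht : t < 1) :
    (DB δ11 δ22 δ12 t - (lam : ℂ) • 1).det =
      ((GB δ11 δ22 δ12 lam t : ℝ) : ℂ) / ((1 - t : ℝ) : ℂ) ^ 2 := by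
  rw [matA, Matrix.det_fin_two_of, det_aux _ _ _ _ _ (one_sub_ne t ht)]
  congr 1
  rw [GB]
  push_cast
  rw [← Complex.mul_conj]

lemma dot_key (δ11 δ22 b1 b2 : ℝ → ℝ) (δ12 : ℝ → ℂ) (lam t : ℝ) (g : ℂ) (hg0 : g ≠ 0)
    (hu : ((1 - t : ℝ) : ℂ) ≠ 0) :
    star (bB b1 b2 t) ⬝ᵥ
      ((g / ((1 - t : ℝ) : ℂ) ^ 2)⁻¹ •
        !![(δ22 t : ℂ) - lam, -(δ12 t / ((1 - t : ℝ) : ℂ));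
           -((starRingEnd ℂ) (δ12 t) / ((1 - t : ℝ) : ℂ)),
           (δ11 t : ℂ) / ((1 - t : ℝ) : ℂ) ^ 2 - lam] *ᵥ bB b1 b2 t) =
      ((b1 t : ℂ) ^ 2 * ((δ22 t : ℂ) - lam)
        - (b1 t : ℂ) * (b2 t : ℂ) * (δ12 t + (starRingEnd ℂ) (δ12 t))
        + (b2 t : ℂ) ^ 2 * ((δ11 t : ℂ) - lam * ((1 - t : ℝ) : ℂ) ^ 2)) / g := by
  have hb : bB b1 b2 t = (-Complex.I) • ![(b1 t : ℂ) / ((1 - t : ℝ) : ℂ), (b2 t : ℂ)] := by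
    funext i; fin_cases i <;> simp [bB]
  have hsb : star (bB b1 b2 t) =
      Complex.I • ![(b1 t : ℂ) / ((1 - t : ℝ) : ℂ), (b2 t : ℂ)] := by
    funext i; fin_cases i <;>
      simp [bB, star_mul', Complex.star_def, map_div₀, Complex.conj_ofReal]
  rw [hsb, hb]
  simp only [Matrix.mulVec_smul, Matrix.smul_mulVec, smul_dotProduct,
    dotProduct_smul, smul_smul, neg_mul, mul_neg, Complex.I_mul_I, neg_neg, one_smul,
    smul_eq_mul]
  have hIx : ∀ s x : ℂ, -(s * Complex.I * (Complex.I * x)) = s * x := by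
    intro s x; linear_combination (-s * x) * Complex.I_mul_I
  rw [hIx]
  simp only [dotProduct, Matrix.mulVec, Fin.sum_univ_two, Matrix.cons_val',
    Matrix.cons_val_zero, Matrix.cons_val_one, Matrix.head_cons, Matrix.empty_val',
    Matrix.cons_val_fin_one, Matrix.head_fin_const, inv_div, Matrix.of_apply]
  set u : ℂ := ((1 - t : ℝ) : ℂ) with hU
  clear_value u
  rw [div_mul_eq_mul_div, div_eq_div_iff hg0 hg0]
  field_simp
  ring

lemma key2 (ϑ δ11 δ22 b1 b2 : ℝ → ℝ) (δ12 : ℝ → ℂ) (lam t : ℝ) (hθ : ϑ t ≠ 0) :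
    (ϑ t : ℂ) * ((GB δ11 δ22 δ12 lam t : ℝ) : ℂ) -
      ((b1 t : ℂ) ^ 2 * ((δ22 t : ℂ) - lam)
        - (b1 t : ℂ) * (b2 t : ℂ) * (δ12 t + (starRingEnd ℂ) (δ12 t))
        + (b2 t : ℂ) ^ 2 * ((δ11 t : ℂ) - lam * ((1 - t : ℝ) : ℂ) ^ 2)) =
      ((FB ϑ δ11 δ22 b1 b2 δ12 lam t : ℝ) : ℂ) := by
  have hθC : ((ϑ t : ℝ) : ℂ) ≠ 0 := by exact_mod_cast hθ
  rw [GB, FB, PhiB, PsiB]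
  push_cast
  simp only [← Complex.mul_conj]
  simp only [map_sub, _root_.map_mul, Complex.conj_ofReal]
  field_simp
  ring

lemma piB_eq (ϑ δ11 δ22 b1 b2 : ℝ → ℝ) (δ12 : ℝ → ℂ) (lam t : ℝ)
    (ht : t < 1) (hθ : ϑ t ≠ 0) (hG : GB δ11 δ22 δ12 lam t ≠ 0) :
    piB ϑ δ11 δ22 b1 b2 δ12 lam t =
      ((FB ϑ δ11 δ22 b1 b2 δ12 lam t / GB δ11 δ22 δ12 lam t : ℝ) : ℂ) := by
  have hu := one_sub_ne t ht
  have hgC : ((GB δ11 δ22 δ12 lam t : ℝ) : ℂ) ≠ 0 := by exact_mod_cast hG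
  have hdet : (DB δ11 δ22 δ12 t - (lam : ℂ) • 1).det ≠ 0 := by
    rw [detB _ _ _ _ _ ht]
    exact div_ne_zero hgC (pow_ne_zero 2 hu)
  have hinv : (DB δ11 δ22 δ12 t - (lam : ℂ) • 1)⁻¹ =
      (((GB δ11 δ22 δ12 lam t : ℝ) : ℂ) / ((1 - t : ℝ) : ℂ) ^ 2)⁻¹ •
        !![(δ22 t : ℂ) - lam, -(δ12 t / ((1 - t : ℝ) : ℂ));
           -((starRingEnd ℂ) (δ12 t) / ((1 - t : ℝ) : ℂ)),
           (δ11 t : ℂ) / ((1 - t : ℝ) : ℂ) ^ 2 - lam] := by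
    rw [Matrix.inv_def, Ring.inverse_eq_inv', detB _ _ _ _ _ ht]
    congr 1
    rw [matA, Matrix.adjugate_fin_two_of]
  rw [piB, hinv, Matrix.smul_mulVec, dot_key _ _ _ _ _ _ _ _ hgC hu]
  rw [Complex.ofReal_div, eq_div_iff hgC, sub_mul, div_mul_cancel₀ _ hgC]
  exact key2 _ _ _ _ _ _ _ _ hθ

lemma normSq_smooth (w : ℝ → ℂ) (hw : ContDiffOn ℝ 1 w (Set.Icc 0 1)) :
    ContDiffOn ℝ 1 (fun t => Complex.normSq (w t)) (Set.Icc (0:ℝ) 1) := by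
  have hre : ContDiffOn ℝ 1 (fun t => (w t).re) (Set.Icc (0:ℝ) 1) :=
    Complex.reCLM.contDiff.comp_contDiffOn hw
  have him : ContDiffOn ℝ 1 (fun t => (w t).im) (Set.Icc (0:ℝ) 1) :=
    Complex.imCLM.contDiff.comp_contDiffOn hw
  simpa [Complex.normSq_apply] using (hre.mul hre).add (him.mul him)

lemma ofReal_smooth (f : ℝ → ℝ) (hf : ContDiffOn ℝ 1 f (Set.Icc 0 1)) :
    ContDiffOn ℝ 1 (fun t => (f t : ℂ)) (Set.Icc (0:ℝ) 1) :=
  Complex.ofRealCLM.contDiff.comp_contDiffOn hf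

/-- (Proposition 7.1 of the paper.)  For `λ ≠ λ_{1,1}`, the matrix
`D(t) - λ` is invertible near `1`, and `π(t,λ) = π₀(λ) + π₁(λ)(t-1) + o(1-t)` as `t ↗ 1`,
with `π₀(λ)` and `π₁(λ)` given by the explicit formulas above. -/
theorem stmt13 (ϑ δ11 δ22 b1 b2 : ℝ → ℝ) (δ12 : ℝ → ℂ)
    (hϑ : ContDiffOn ℝ 1 ϑ (Set.Icc 0 1)) (h11 : ContDiffOn ℝ 1 δ11 (Set.Icc 0 1))
    (h22 : ContDiffOn ℝ 1 δ22 (Set.Icc 0 1)) (hb1 : ContDiffOn ℝ 1 b1 (Set.Icc 0 1))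
    (hb2 : ContDiffOn ℝ 1 b2 (Set.Icc 0 1)) (h12 : ContDiffOn ℝ 1 δ12 (Set.Icc 0 1))
    (hϑ0 : ∀ x ∈ Set.Icc (0 : ℝ) 1, ϑ x ≠ 0) (h110 : δ11 1 ≠ 0)
    (lam : ℝ) (hlam : lam ≠ δ22 1 - Complex.normSq (δ12 1) / δ11 1) :
    ∃ t₀ : ℝ, t₀ < 1 ∧
      (∀ t ∈ Set.Ioo t₀ 1, IsUnit (DB δ11 δ22 δ12 t - (lam : ℂ) • 1)) ∧
      Tendsto (fun t => piB ϑ δ11 δ22 b1 b2 δ12 lam t) (𝓝[<] 1)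
        (𝓝 ((pi0B ϑ δ11 δ22 b1 b2 δ12 lam : ℝ) : ℂ)) ∧
      Tendsto (fun t =>
          (piB ϑ δ11 δ22 b1 b2 δ12 lam t - ((pi0B ϑ δ11 δ22 b1 b2 δ12 lam : ℝ) : ℂ)) /
            ((t : ℂ) - 1))
        (𝓝[<] 1) (𝓝 ((pi1B ϑ δ11 δ22 b1 b2 δ12 lam : ℝ) : ℂ)) ∧
      (fun t => piB ϑ δ11 δ22 b1 b2 δ12 lam t -
          ((pi0B ϑ δ11 δ22 b1 b2 δ12 lam : ℝ) : ℂ) -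
          ((pi1B ϑ δ11 δ22 b1 b2 δ12 lam : ℝ) : ℂ) * ((t : ℂ) - 1)) =o[𝓝[<] 1]
        (fun t => 1 - t) := by
  classical
  set s : Set ℝ := Set.Icc 0 1 with hs
  have h1s : (1 : ℝ) ∈ s := Set.right_mem_Icc.mpr zero_le_one
  -- basic nonvanishing at 1
  have hX1 : δ11 1 * δ22 1 - Complex.normSq (δ12 1) - lam * δ11 1 ≠ 0 := by
    intro h
    apply hlam
    field_simp
    linear_combination -h
  -- smoothness of the building blocks
  have hC : ∀ f : ℝ → ℝ, ContDiffOn ℝ 1 f s →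
      ContDiffOn ℝ 1 (fun t => (f t : ℂ)) s := fun f hf =>
    Complex.ofRealCLM.contDiff.comp_contDiffOn hf
  have hPhiSm : ContDiffOn ℝ 1 (PhiB ϑ δ11 δ22 b1 b2 δ12) s := by
    have hw : ContDiffOn ℝ 1 (fun t => (ϑ t : ℂ) * δ12 t - (b1 t : ℂ) * (b2 t : ℂ)) s :=
      ((hC ϑ hϑ).mul h12).sub ((hC b1 hb1).mul (hC b2 hb2))
    exact (contDiffOn_const.div hϑ hϑ0).mul
      ((((hϑ.mul h11).sub (hb1.pow 2)).mul ((hϑ.mul h22).sub (hb2.pow 2))).sub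
        (normSq_smooth _ hw))
  have hPsiSm : ContDiffOn ℝ 1 (PsiB ϑ δ11 δ22 b1 b2) s := by
    exact ((hϑ.mul h11).sub (hb1.pow 2)).add
      ((contDiffOn_const.sub contDiffOn_id).pow 2 |>.mul ((hϑ.mul h22).sub (hb2.pow 2)))
  have hxiSm : ContDiffOn ℝ 1 (xiB δ11 δ22 δ12 lam) s :=
    ((h11.mul h22).sub (normSq_smooth _ h12)).sub (h11.const_smul lam)
  -- derivatives within `s` at `1`
  have hPhiD : HasDerivWithinAt (PhiB ϑ δ11 δ22 b1 b2 δ12)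
      (derivWithin (PhiB ϑ δ11 δ22 b1 b2 δ12) s 1) s 1 :=
    (hPhiSm.differentiableOn one_ne_zero 1 h1s).hasDerivWithinAt
  have hPsiD : HasDerivWithinAt (PsiB ϑ δ11 δ22 b1 b2)
      (derivWithin (PsiB ϑ δ11 δ22 b1 b2) s 1) s 1 :=
    (hPsiSm.differentiableOn one_ne_zero 1 h1s).hasDerivWithinAt
  have hxiD : HasDerivWithinAt (xiB δ11 δ22 δ12 lam)
      (derivWithin (xiB δ11 δ22 δ12 lam) s 1) s 1 :=
    (hxiSm.differentiableOn one_ne_zero 1 h1s).hasDerivWithinAt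
  have hθD : HasDerivWithinAt ϑ (derivWithin ϑ s 1) s 1 :=
    (hϑ.differentiableOn one_ne_zero 1 h1s).hasDerivWithinAt
  have h22D : HasDerivWithinAt δ22 (derivWithin δ22 s 1) s 1 :=
    (h22.differentiableOn one_ne_zero 1 h1s).hasDerivWithinAt
  have hpoly : ∀ c : ℝ, HasDerivWithinAt (fun t : ℝ => c * (1 - t) ^ 2) 0 s 1 := by
    intro c
    have h := ((((hasDerivAt_id (1:ℝ)).const_sub 1).pow 2).const_mul c).hasDerivWithinAt
      (s := s)
    simpa using h
  set dPhi := derivWithin (PhiB ϑ δ11 δ22 b1 b2 δ12) s 1 with hdPhi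
  set dPsi := derivWithin (PsiB ϑ δ11 δ22 b1 b2) s 1 with hdPsi
  set dXi := derivWithin (xiB δ11 δ22 δ12 lam) s 1 with hdXi
  have hFD : HasDerivWithinAt (FB ϑ δ11 δ22 b1 b2 δ12 lam) (dPhi - dPsi * lam) s 1 := by
    have h := (hPhiD.sub (hPsiD.const_mul lam)).add ((hpoly (lam ^ 2)).mul hθD)
    have : HasDerivWithinAt (FB ϑ δ11 δ22 b1 b2 δ12 lam)
        (dPhi - lam * dPsi + (0 * ϑ 1 + lam ^ 2 * (1 - 1) ^ 2 * derivWithin ϑ s 1)) s 1 := h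
    convert this using 1
    norm_num
    ring
  have hGD : HasDerivWithinAt (GB δ11 δ22 δ12 lam) dXi s 1 := by
    have h := hxiD.sub ((hpoly lam).mul (h22D.sub_const lam))
    have : HasDerivWithinAt (GB δ11 δ22 δ12 lam)
        (dXi - (0 * (δ22 1 - lam) + lam * (1 - 1) ^ 2 * derivWithin δ22 s 1)) s 1 := h
    convert this using 1
    norm_num
  have hG1 : GB δ11 δ22 δ12 lam 1 = δ11 1 * δ22 1 - Complex.normSq (δ12 1) - lam * δ11 1 := by
    simp [GB]
  have hGX : GB δ11 δ22 δ12 lam 1 ≠ 0 := by rw [hG1]; exact hX1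
  have hF1 : FB ϑ δ11 δ22 b1 b2 δ12 lam 1 =
      PhiB ϑ δ11 δ22 b1 b2 δ12 1 - PsiB ϑ δ11 δ22 b1 b2 1 * lam := by
    simp [FB]; ring
  -- the quotient function and its derivative
  set q : ℝ → ℝ := fun t => FB ϑ δ11 δ22 b1 b2 δ12 lam t / GB δ11 δ22 δ12 lam t with hq
  set d : ℝ := ((dPhi - dPsi * lam) * GB δ11 δ22 δ12 lam 1 -
      FB ϑ δ11 δ22 b1 b2 δ12 lam 1 * dXi) / GB δ11 δ22 δ12 lam 1 ^ 2 with hd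
  have hqD : HasDerivWithinAt q d s 1 := hFD.div hGD hGX
  have hq1 : q 1 = pi0B ϑ δ11 δ22 b1 b2 δ12 lam := by
    rw [hq, pi0B]
    simp only [hF1, hG1]
  have hd1 : d = pi1B ϑ δ11 δ22 b1 b2 δ12 lam := by
    rw [hd, pi1B, pi0B, hF1, hG1, ← hs, ← hdPhi, ← hdPsi, ← hdXi]
    field_simp
  -- filters
  have hIoo : Set.Ioo (0:ℝ) 1 ∈ 𝓝[<] (1:ℝ) :=
    mem_nhdsLT_iff_exists_Ioo_subset.mpr ⟨0, by norm_num, subset_rfl⟩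
  have hle : 𝓝[<] (1:ℝ) ≤ 𝓝[s] 1 :=
    nhdsWithin_le_iff.mpr (mem_of_superset hIoo Set.Ioo_subset_Icc_self)
  have hle' : 𝓝[<] (1:ℝ) ≤ 𝓝[s \ {1}] 1 :=
    nhdsWithin_le_iff.mpr (mem_of_superset hIoo (fun x hx =>
      ⟨Set.Ioo_subset_Icc_self hx, fun h => (by exact_mod_cast h ▸ hx.2 : (1:ℝ) < 1).false⟩))
  -- eventual nonvanishing of GB
  have hGcont : Tendsto (GB δ11 δ22 δ12 lam) (𝓝[<] 1) (𝓝 (GB δ11 δ22 δ12 lam 1)) :=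
    (hGD.continuousWithinAt).mono_left hle
  have hGne : ∀ᶠ t in 𝓝[<] (1:ℝ), GB δ11 δ22 δ12 lam t ≠ 0 :=
    hGcont.eventually (eventually_ne_nhds hGX)
  have hEv : ∀ᶠ t in 𝓝[<] (1:ℝ), t ∈ Set.Ioo (0:ℝ) 1 ∧ GB δ11 δ22 δ12 lam t ≠ 0 :=
    (Filter.eventually_of_mem hIoo fun x hx => hx).and hGne
  obtain ⟨l, hl1, hsub⟩ := mem_nhdsLT_iff_exists_Ioo_subset.mp hEv
  -- eventual identification of piB with the real quotient q
  have hpiEq : (fun t => piB ϑ δ11 δ22 b1 b2 δ12 lam t) =ᶠ[𝓝[<] (1:ℝ)]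
      (fun t => ((q t : ℝ) : ℂ)) :=
    hEv.mono fun t ht => piB_eq ϑ δ11 δ22 b1 b2 δ12 lam t ht.1.2
      (hϑ0 t (Set.Ioo_subset_Icc_self ht.1)) ht.2
  have hqc : Tendsto q (𝓝[<] 1) (𝓝 (pi0B ϑ δ11 δ22 b1 b2 δ12 lam)) := by
    have h := (hqD.continuousWithinAt).mono_left hle
    rwa [hq1] at h
  have hsl : Tendsto (fun t => (q t - q 1) / (t - 1)) (𝓝[<] 1) (𝓝 d) :=
    ((hasDerivWithinAt_iff_tendsto_slope.mp hqD).mono_left hle').congr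
      fun t => slope_def_field q 1 t
  have hlt1 : ∀ᶠ t in 𝓝[<] (1:ℝ), t < 1 := self_mem_nhdsWithin
  refine ⟨max l 0, max_lt hl1 zero_lt_one, ?_, ?_, ?_, ?_⟩
  · intro t ht
    have hE := hsub ⟨lt_of_le_of_lt (le_max_left l 0) ht.1, ht.2⟩
    refine (Matrix.isUnit_iff_isUnit_det _).mpr (isUnit_iff_ne_zero.mpr ?_)
    rw [detB _ _ _ _ _ ht.2]
    exact div_ne_zero (by exact_mod_cast hE.2) (pow_ne_zero 2 (one_sub_ne t ht.2))
  · exact Tendsto.congr' hpiEq.symm ((Complex.continuous_ofReal.tendsto _).comp hqc)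
  · have h1 : Tendsto (fun t => (((q t - q 1) / (t - 1) : ℝ) : ℂ)) (𝓝[<] 1)
        (𝓝 ((pi1B ϑ δ11 δ22 b1 b2 δ12 lam : ℝ) : ℂ)) := by
      rw [← hd1]
      exact (Complex.continuous_ofReal.tendsto _).comp hsl
    refine Tendsto.congr' ?_ h1
    filter_upwards [hpiEq] with t ht
    rw [ht, hq1]
    push_cast
    ring
  · have h0 : Tendsto (fun t => (q t - q 1) / (t - 1) - d) (𝓝[<] 1) (𝓝 0) := by
      simpa using hsl.sub_const d
    have hron : (fun t => q t - q 1 - d * (t - 1)) =o[𝓝[<] (1:ℝ)] (fun t => 1 - t) := by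
      rw [isLittleO_iff_tendsto' (hlt1.mono fun t ht h => absurd h (by intro h'; linarith))]
      have h0' : Tendsto (fun t => -((q t - q 1) / (t - 1) - d)) (𝓝[<] (1:ℝ)) (𝓝 0) := by
        simpa using h0.neg
      refine Tendsto.congr' ?_ h0'
      have key : ∀ A B D T : ℝ, T - 1 ≠ 0 →
          -((A - B) / (T - 1) - D) = (A - B - D * (T - 1)) / (1 - T) := by
        intro A B D T hT
        have h1T : 1 - T ≠ 0 := by intro h'; apply hT; linarith
        field_simp
        ring
      filter_upwards [hlt1] with t ht
      exact key _ _ _ _ (by intro h'; linarith)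
    have hoc : (fun t => (((q t - q 1 - d * (t - 1)) : ℝ) : ℂ)) =o[𝓝[<] (1:ℝ)]
        (fun t => 1 - t) :=
      (Complex.ofRealCLM.isBigO_comp _ _).trans_isLittleO hron
    refine hoc.congr' ?_ EventuallyEq.rfl
    filter_upwards [hpiEq] with t ht
    rw [ht, hq1, hd1]
    push_cast
    ring
end

section
/- Let δ₁₁, δ₂₂ : [0,1] → ℝ and δ₁₂ : [0,1] → ℂ be continuous with δ₁₁(1) ≠ 0. For t ∈ [0,1) let D(t) be the Hermitian 2×2 matrix with entries D(t)₁₁ = δ₁₁(t)/(1−t)², D(t)₁₂ = δ₁₂(t)/(1−t), D(t)₂₁ = conj(δ₁₂(t))/(1−t), D(t)₂₂ = δ₂₂(t). Then there exist functions λ₁, λ₂ : [0,1) → ℝ such that for every t ∈ [0,1) the characteristic polynomial of D(t) equals (X − λ₁(t))(X − λ₂(t)), and, as t ↗ 1, λ₁(t) → δ₂₂(1) − |δ₁₂(1)|²/δ₁₁(1) and (1−t)²·λ₂(t) → δ₁₁(1) (so in particular |λ₂(t)| → ∞). -/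
open Matrix Filter Topology

/-- The eigenvalues `λ₁(t), λ₂(t)` of `D(t)` can be chosen (as real
functions) so that the characteristic polynomial of `D(t)` is `(X - λ₁(t))(X - λ₂(t))`,
`λ₁(t) → δ₂₂(1) - |δ₁₂(1)|²/δ₁₁(1)` and `(1-t)²·λ₂(t) → δ₁₁(1)` as `t ↗ 1`; in
particular `|λ₂(t)| → ∞`. -/
theorem stmt14 (δ11 δ22 : ℝ → ℝ) (δ12 : ℝ → ℂ)
    (h11c : ContinuousOn δ11 (Set.Icc 0 1)) (h22c : ContinuousOn δ22 (Set.Icc 0 1))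
    (h12c : ContinuousOn δ12 (Set.Icc 0 1)) (h110 : δ11 1 ≠ 0) :
    ∃ lam1 lam2 : ℝ → ℝ,
      (∀ t ∈ Set.Ico (0 : ℝ) 1,
        (DB δ11 δ22 δ12 t).charpoly =
          (Polynomial.X - Polynomial.C ((lam1 t : ℂ))) *
            (Polynomial.X - Polynomial.C ((lam2 t : ℂ)))) ∧
      Tendsto lam1 (𝓝[<] 1) (𝓝 (δ22 1 - Complex.normSq (δ12 1) / δ11 1)) ∧
      Tendsto (fun t => (1 - t) ^ 2 * lam2 t) (𝓝[<] 1) (𝓝 (δ11 1)) ∧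
      Tendsto (fun t => |lam2 t|) (𝓝[<] 1) atTop := by
  classical
  set n : ℝ → ℝ := fun t => Complex.normSq (δ12 t) with hn
  set T : ℝ → ℝ := fun t => δ11 t / (1 - t) ^ 2 + δ22 t with hT
  set dsc : ℝ → ℝ := fun t =>
    (δ11 t / (1 - t) ^ 2 - δ22 t) ^ 2 + 4 * n t / (1 - t) ^ 2 with hdsc
  set s : ℝ → ℝ := fun t => if 0 ≤ δ11 t then 1 else -1 with hsdef
  set lam1 : ℝ → ℝ := fun t => (T t - s t * Real.sqrt (dsc t)) / 2 with hlam1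
  set lam2 : ℝ → ℝ := fun t => (T t + s t * Real.sqrt (dsc t)) / 2 with hlam2
  have hn0 : ∀ t, 0 ≤ n t := fun t => Complex.normSq_nonneg _
  have hdsc0 : ∀ t ∈ Set.Iio (1 : ℝ), 0 ≤ dsc t := by
    intro t ht
    have h4 : (0:ℝ) ≤ 4 * n t := by nlinarith [hn0 t]
    exact add_nonneg (sq_nonneg _) (div_nonneg h4 (sq_nonneg _))
  have hs2 : ∀ t, s t ^ 2 = 1 := by
    intro t; by_cases h : 0 ≤ δ11 t <;> simp [hsdef, h]
  have hsum : ∀ t, lam1 t + lam2 t = T t := by intro t; simp only [hlam1, hlam2]; ring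
  have hprod : ∀ t ∈ Set.Iio (1 : ℝ),
      lam1 t * lam2 t = (δ11 t * δ22 t - n t) / (1 - t) ^ 2 := by
    intro t ht
    have h1t : (1 : ℝ) - t ≠ 0 := sub_ne_zero.mpr (ne_of_lt ht).symm
    have : lam1 t * lam2 t = (T t ^ 2 - s t ^ 2 * Real.sqrt (dsc t) ^ 2) / 4 := by
      simp only [hlam1, hlam2]; ring
    rw [this, hs2, Real.sq_sqrt (hdsc0 t ht), hT, hdsc]
    field_simp
    ring
  have key : 𝓝[<] (1:ℝ) ≤ 𝓝[Set.Icc 0 1] 1 := by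
    rw [← nhdsWithin_Ioo_eq_nhdsLT (zero_lt_one (α := ℝ))]
    exact nhdsWithin_mono _ Set.Ioo_subset_Icc_self
  have h1mem : (1:ℝ) ∈ Set.Icc (0:ℝ) 1 := by norm_num
  have ht11 : Tendsto δ11 (𝓝[<] (1:ℝ)) (𝓝 (δ11 1)) := (h11c 1 h1mem).mono_left key
  have ht22 : Tendsto δ22 (𝓝[<] (1:ℝ)) (𝓝 (δ22 1)) := (h22c 1 h1mem).mono_left key
  have ht12 : Tendsto δ12 (𝓝[<] (1:ℝ)) (𝓝 (δ12 1)) := (h12c 1 h1mem).mono_left key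
  have htn : Tendsto n (𝓝[<] (1:ℝ)) (𝓝 (n 1)) :=
    (Complex.continuous_normSq.tendsto _).comp ht12
  have htu : Tendsto (fun t : ℝ => (1 - t) ^ 2) (𝓝[<] (1:ℝ)) (𝓝 0) := by
    have h : Tendsto (fun t : ℝ => (1 - t) ^ 2) (𝓝 1) (𝓝 (((1:ℝ) - 1) ^ 2)) :=
      Continuous.tendsto (by continuity) 1
    simpa using h.mono_left nhdsWithin_le_nhds
  have hmem : ∀ᶠ t in 𝓝[<] (1:ℝ), t ∈ Set.Iio (1:ℝ) := self_mem_nhdsWithin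
  have hAeq : ∀ t ∈ Set.Iio (1:ℝ), (1 - t) ^ 2 * lam2 t
      = ((δ11 t + (1 - t) ^ 2 * δ22 t)
          + s t * Real.sqrt ((δ11 t - (1 - t) ^ 2 * δ22 t) ^ 2
              + 4 * ((1 - t) ^ 2 * n t))) / 2 := by
    intro t ht
    have h1t : (1:ℝ) - t ≠ 0 := sub_ne_zero.mpr (ne_of_lt ht).symm
    have hu0 : (0:ℝ) < (1 - t) ^ 2 :=
      lt_of_le_of_ne (sq_nonneg _) (Ne.symm (pow_ne_zero 2 h1t))
    have hg2 : (δ11 t - (1 - t) ^ 2 * δ22 t) ^ 2 + 4 * ((1 - t) ^ 2 * n t)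
        = ((1 - t) ^ 2) ^ 2 * dsc t := by
      simp only [hdsc]; field_simp
    have hsqrt : Real.sqrt ((δ11 t - (1 - t) ^ 2 * δ22 t) ^ 2 + 4 * ((1 - t) ^ 2 * n t))
        = (1 - t) ^ 2 * Real.sqrt (dsc t) := by
      rw [hg2, Real.sqrt_mul (sq_nonneg _), Real.sqrt_sq hu0.le]
    have hT' : δ11 t + (1 - t) ^ 2 * δ22 t = (1 - t) ^ 2 * T t := by
      simp only [hT]; field_simp
    rw [hsqrt, hT']
    simp only [hlam2]; ring
  have hg1 : Tendsto (fun t => δ11 t + (1 - t) ^ 2 * δ22 t) (𝓝[<] (1:ℝ)) (𝓝 (δ11 1)) := by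
    have h := ht11.add (htu.mul ht22); simpa using h
  have hg2t : Tendsto (fun t => Real.sqrt ((δ11 t - (1 - t) ^ 2 * δ22 t) ^ 2
      + 4 * ((1 - t) ^ 2 * n t))) (𝓝[<] (1:ℝ)) (𝓝 |δ11 1|) := by
    have h0 : Tendsto (fun t => (δ11 t - (1 - t) ^ 2 * δ22 t) ^ 2
        + 4 * ((1 - t) ^ 2 * n t)) (𝓝[<] (1:ℝ)) (𝓝 ((δ11 1) ^ 2)) := by
      have h := ((ht11.sub (htu.mul ht22)).pow 2).add ((htu.mul htn).const_mul 4)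
      simpa using h
    have h := (Real.continuous_sqrt.tendsto _).comp h0
    simpa [Real.sqrt_sq_eq_abs, Function.comp_def] using h
  have hA : Tendsto (fun t => (1 - t) ^ 2 * lam2 t) (𝓝[<] (1:ℝ)) (𝓝 (δ11 1)) := by
    rcases lt_or_gt_of_ne h110 with hneg | hpos
    · have hev : ∀ᶠ t in 𝓝[<] (1:ℝ), δ11 t < 0 := ht11.eventually (eventually_lt_nhds hneg)
      have hlim := (hg1.sub hg2t).div_const 2
      have hval : (δ11 1 - |δ11 1|) / 2 = δ11 1 := by rw [abs_of_neg hneg]; ring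
      rw [hval] at hlim
      refine hlim.congr' ?_
      filter_upwards [hmem, hev] with t ht hst
      rw [hAeq t ht, show s t = -1 from by simp [hsdef, not_le.mpr hst]]; ring
    · have hev : ∀ᶠ t in 𝓝[<] (1:ℝ), 0 < δ11 t := ht11.eventually (eventually_gt_nhds hpos)
      have hlim := (hg1.add hg2t).div_const 2
      have hval : (δ11 1 + |δ11 1|) / 2 = δ11 1 := by rw [abs_of_pos hpos]; ring
      rw [hval] at hlim
      refine hlim.congr' ?_
      filter_upwards [hmem, hev] with t ht hst
      rw [hAeq t ht, show s t = 1 from by simp [hsdef, le_of_lt hst]]; ring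
  have hAne : ∀ᶠ t in 𝓝[<] (1:ℝ), (1 - t) ^ 2 * lam2 t ≠ 0 := hA.eventually_ne h110
  refine ⟨lam1, lam2, ?_, ?_, ?_, ?_⟩
  · -- charpoly
    intro t ht
    have h1t : ((1 - t : ℝ) : ℂ) ≠ 0 := by
      exact_mod_cast (sub_ne_zero.mpr (ne_of_lt ht.2).symm : (1:ℝ) - t ≠ 0)
    have htr : (((T t : ℝ)) : ℂ) = (lam1 t : ℂ) + (lam2 t : ℂ) := by
      exact_mod_cast (hsum t).symm
    have hdet : (((δ11 t * δ22 t - n t) / (1 - t) ^ 2 : ℝ) : ℂ)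
        = (lam1 t : ℂ) * (lam2 t : ℂ) := by
      exact_mod_cast (hprod t ht.2).symm
    rw [Matrix.charpoly, Matrix.det_fin_two]
    simp only [DB, charmatrix_apply_eq, charmatrix_apply_ne _ _ _ (by decide : (0 : Fin 2) ≠ 1),
      charmatrix_apply_ne _ _ _ (by decide : (1 : Fin 2) ≠ 0),
      Matrix.cons_val', Matrix.cons_val_zero, Matrix.cons_val_one, Matrix.head_cons,
      Matrix.head_fin_const, Matrix.cons_val_fin_one, Matrix.of_apply, Matrix.empty_val',
      Matrix.head_val']
    have hmc : δ12 t * (starRingEnd ℂ) (δ12 t) = ((n t : ℝ) : ℂ) := Complex.mul_conj _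
    have e1 : ((δ11 t : ℂ) / ((1 - t : ℝ) : ℂ) ^ 2) + (δ22 t : ℂ)
        = (lam1 t : ℂ) + (lam2 t : ℂ) := by
      rw [← htr, hT]; push_cast; ring
    have e2 : ((δ11 t : ℂ) / ((1 - t : ℝ) : ℂ) ^ 2) * (δ22 t : ℂ)
        - (δ12 t / ((1 - t : ℝ) : ℂ)) * ((starRingEnd ℂ) (δ12 t) / ((1 - t : ℝ) : ℂ))
        = (lam1 t : ℂ) * (lam2 t : ℂ) := by
      rw [← hdet]
      have : (δ12 t / ((1 - t : ℝ) : ℂ)) * ((starRingEnd ℂ) (δ12 t) / ((1 - t : ℝ) : ℂ))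
          = ((n t : ℝ) : ℂ) / ((1 - t : ℝ) : ℂ) ^ 2 := by
        field_simp
        rw [hmc]
      rw [this]
      push_cast
      field_simp
    have E1 : Polynomial.C ((δ11 t : ℂ) / ((1 - t : ℝ) : ℂ) ^ 2) + Polynomial.C ((δ22 t : ℂ))
        = Polynomial.C ((lam1 t : ℂ)) + Polynomial.C ((lam2 t : ℂ)) := by
      rw [← map_add, ← map_add, e1]
    have E2 : Polynomial.C ((δ11 t : ℂ) / ((1 - t : ℝ) : ℂ) ^ 2) * Polynomial.C ((δ22 t : ℂ))
        - Polynomial.C (δ12 t / ((1 - t : ℝ) : ℂ)) *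
          Polynomial.C ((starRingEnd ℂ) (δ12 t) / ((1 - t : ℝ) : ℂ))
        = Polynomial.C ((lam1 t : ℂ)) * Polynomial.C ((lam2 t : ℂ)) := by
      rw [← Polynomial.C_mul, ← Polynomial.C_mul, ← Polynomial.C_sub, e2, Polynomial.C_mul]
    linear_combination (-(Polynomial.X : Polynomial ℂ)) * E1 + E2
  · -- lam1 limit
    have hlam1ev : ∀ᶠ t in 𝓝[<] (1:ℝ),
        lam1 t = (δ11 t * δ22 t - n t) / ((1 - t) ^ 2 * lam2 t) := by
      filter_upwards [hmem, hAne] with t ht hA0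
      have h1t : (1:ℝ) - t ≠ 0 := sub_ne_zero.mpr (ne_of_lt ht).symm
      have hu0 : ((1:ℝ) - t) ^ 2 ≠ 0 := pow_ne_zero 2 h1t
      rw [eq_div_iff hA0]
      calc lam1 t * ((1 - t) ^ 2 * lam2 t)
          = (1 - t) ^ 2 * (lam1 t * lam2 t) := by ring
        _ = (1 - t) ^ 2 * ((δ11 t * δ22 t - n t) / (1 - t) ^ 2) := by rw [hprod t ht]
        _ = δ11 t * δ22 t - n t := mul_div_cancel₀ _ hu0
    have hlimA : Tendsto (fun t => (δ11 t * δ22 t - n t) / ((1 - t) ^ 2 * lam2 t))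
        (𝓝[<] (1:ℝ)) (𝓝 ((δ11 1 * δ22 1 - n 1) / δ11 1)) :=
      ((ht11.mul ht22).sub htn).div hA h110
    have hval : (δ11 1 * δ22 1 - n 1) / δ11 1 = δ22 1 - n 1 / δ11 1 := by
      field_simp
    rw [hval] at hlimA
    exact hlimA.congr' (Filter.EventuallyEq.symm hlam1ev)
  · exact hA
  · -- |lam2| → atTop
    have habs : ∀ᶠ t in 𝓝[<] (1:ℝ),
        |(1 - t) ^ 2 * lam2 t| * ((1 - t) ^ 2)⁻¹ = |lam2 t| := by
      filter_upwards [hmem] with t ht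
      have h1t : (1:ℝ) - t ≠ 0 := sub_ne_zero.mpr (ne_of_lt ht).symm
      have hu0 : (0:ℝ) < (1 - t) ^ 2 :=
        lt_of_le_of_ne (sq_nonneg _) (Ne.symm (pow_ne_zero 2 h1t))
      rw [abs_mul, abs_of_pos hu0]
      field_simp
    have huinv : Tendsto (fun t => (((1 - t) ^ 2 : ℝ))⁻¹) (𝓝[<] (1:ℝ)) atTop := by
      apply tendsto_inv_nhdsGT_zero.comp
      apply tendsto_nhdsWithin_of_tendsto_nhds_of_eventually_within _ htu
      filter_upwards [hmem] with t ht
      have h1t : (1:ℝ) - t ≠ 0 := sub_ne_zero.mpr (ne_of_lt ht).symm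
      exact lt_of_le_of_ne (sq_nonneg _) (Ne.symm (pow_ne_zero 2 h1t))
    exact (Filter.Tendsto.pos_mul_atTop (abs_pos.mpr h110) hA.abs huinv).congr' (habs : _ =ᶠ[_] _)
end

section
/- Let R > 1, let a > 0 and let n ≥ 1 be a real number. Let θ : [1,R] → ℝ be twice continuously differentiable with θ(t) > 0 for all t ∈ [1,R), θ(R) = 0, and suppose θ satisfies the Lane–Emden equation θ″(t) + (2/t)·θ′(t) = −θ(t)ⁿ/a² for all t ∈ [1,R]. Then θ′(R) ≠ 0 and (t−R)·θ′(t)/θ(t) → 1 as t ↗ R. -/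
open Filter Topology

/-- (Lemma 8.1 of the paper.)  Let `θ` be twice continuously
differentiable on `[1,R]` (with one-sided derivatives `θ'`, `θ''` within `[1,R]`),
positive on `[1,R)` with `θ(R) = 0`, satisfying the Lane–Emden equation
`θ'' + (2/t)·θ' = -θⁿ/a²` on `[1,R]`.  Then `θ'(R) ≠ 0` and
`(t-R)·θ'(t)/θ(t) → 1` as `t ↗ R`. -/
theorem stmt15 (R a nn : ℝ) (hR : 1 < R) (ha : 0 < a) (hn : 1 ≤ nn)
    (θ θ' θ'' : ℝ → ℝ)
    (hd1 : ∀ t ∈ Set.Icc 1 R, HasDerivWithinAt θ (θ' t) (Set.Icc 1 R) t)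
    (hd2 : ∀ t ∈ Set.Icc 1 R, HasDerivWithinAt θ' (θ'' t) (Set.Icc 1 R) t)
    (hc : ContinuousOn θ'' (Set.Icc 1 R))
    (hpos : ∀ t ∈ Set.Ico (1 : ℝ) R, 0 < θ t)
    (hθR : θ R = 0)
    (hode : ∀ t ∈ Set.Icc 1 R, θ'' t + (2 / t) * θ' t = -(θ t ^ nn) / a ^ 2) :
    θ' R ≠ 0 ∧ Tendsto (fun t => (t - R) * θ' t / θ t) (𝓝[<] R) (𝓝 1) := by
  have hRmem : R ∈ Set.Icc (1:ℝ) R := ⟨le_of_lt hR, le_refl R⟩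
  have hθcont : ContinuousOn θ (Set.Icc 1 R) := fun t ht => (hd1 t ht).continuousWithinAt
  have hθ'cont : ContinuousOn θ' (Set.Icc 1 R) := fun t ht => (hd2 t ht).continuousWithinAt
  -- θ' R ≠ 0
  have hne : θ' R ≠ 0 := by
    intro h0
    set g : ℝ → ℝ := fun t => t ^ 2 * θ' t with hg
    have hgd : ∀ t ∈ Set.Icc (1:ℝ) R,
        HasDerivWithinAt g (-(t ^ 2 * θ t ^ nn / a ^ 2)) (Set.Icc 1 R) t := by
      intro t ht
      have h := ((hasDerivAt_pow 2 t).hasDerivWithinAt).mul (hd2 t ht)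
      convert h using 1
      any_goals rfl
      have ht0 : (0:ℝ) < t := lt_of_lt_of_le one_pos ht.1
      have := hode t ht
      rw [show -(t ^ 2 * θ t ^ nn / a ^ 2) = t ^ 2 * (-(θ t ^ nn) / a ^ 2) by ring, ← this]
      field_simp
      norm_num
      ring
    have hganti : StrictAntiOn g (Set.Icc 1 R) := by
      apply strictAntiOn_of_deriv_neg (convex_Icc 1 R)
      · exact fun t ht => (hgd t ht).continuousWithinAt
      · intro x hx
        rw [interior_Icc] at hx
        have hx' : x ∈ Set.Icc (1:ℝ) R := ⟨le_of_lt hx.1, le_of_lt hx.2⟩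
        have hda : HasDerivAt g (-(x ^ 2 * θ x ^ nn / a ^ 2)) x :=
          (hgd x hx').hasDerivAt (Icc_mem_nhds (by linarith [hx.1]) (by linarith [hx.2]))
        rw [hda.deriv]
        have hθx : 0 < θ x := hpos x ⟨le_of_lt hx.1, hx.2⟩
        have h1 : 0 < x := by linarith [hx.1]
        have : 0 < x ^ 2 * θ x ^ nn / a ^ 2 := by positivity
        linarith
    have hθ'pos : ∀ t ∈ Set.Ico (1:ℝ) R, 0 < θ' t := by
      intro t ht
      have hg0 : g R < g t := hganti ⟨ht.1, le_of_lt ht.2⟩ hRmem ht.2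
      simp only [hg, h0, mul_zero] at hg0
      nlinarith [hg0, ht.1]
    have hmono : StrictMonoOn θ (Set.Icc 1 R) := by
      apply strictMonoOn_of_deriv_pos (convex_Icc 1 R) hθcont
      intro x hx
      rw [interior_Icc] at hx
      have hx' : x ∈ Set.Icc (1:ℝ) R := ⟨le_of_lt hx.1, le_of_lt hx.2⟩
      have hda : HasDerivAt θ (θ' x) x :=
        (hd1 x hx').hasDerivAt (Icc_mem_nhds (by linarith [hx.1]) (by linarith [hx.2]))
      rw [hda.deriv]
      exact hθ'pos x ⟨le_of_lt hx.1, hx.2⟩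
    have hm : (1 + R) / 2 ∈ Set.Icc (1:ℝ) R := ⟨by linarith, by linarith⟩
    have := hmono hm hRmem (by linarith)
    have := hpos ((1 + R) / 2) ⟨by linarith, by linarith⟩
    rw [hθR] at *
    linarith
  refine ⟨hne, ?_⟩
  -- filter facts
  have hfil : 𝓝[<] R ≤ 𝓝[Set.Icc 1 R \ {R}] R := by
    rw [← nhdsWithin_Ioo_eq_nhdsLT hR]
    apply nhdsWithin_mono
    intro x hx
    exact ⟨⟨le_of_lt hx.1, le_of_lt hx.2⟩, ne_of_lt hx.2⟩
  have hfil2 : 𝓝[<] R ≤ 𝓝[Set.Icc 1 R] R := by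
    rw [← nhdsWithin_Ioo_eq_nhdsLT hR]
    exact nhdsWithin_mono _ Set.Ioo_subset_Icc_self
  have h1 : Tendsto θ' (𝓝[<] R) (𝓝 (θ' R)) :=
    ((hθ'cont R hRmem).tendsto).mono_left hfil2
  have h2 : Tendsto (fun t => θ t / (t - R)) (𝓝[<] R) (𝓝 (θ' R)) := by
    have := (hasDerivWithinAt_iff_tendsto_slope.1 (hd1 R hRmem)).mono_left hfil
    apply this.congr'
    filter_upwards [self_mem_nhdsWithin] with t ht
    simp [slope_def_field, hθR]
  have hdiv : Tendsto (fun t => θ' t / (θ t / (t - R))) (𝓝[<] R) (𝓝 (θ' R / θ' R)) :=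
    h1.div h2 hne
  rw [div_self hne] at hdiv
  apply hdiv.congr'
  have hIoo : Set.Ioo 1 R ∈ 𝓝[<] R := by
    rw [← nhdsWithin_Ioo_eq_nhdsLT hR]
    exact self_mem_nhdsWithin
  filter_upwards [hIoo] with t ht
  have hθt : θ t ≠ 0 := ne_of_gt (hpos t ⟨le_of_lt ht.1, ht.2⟩)
  have htR : t - R ≠ 0 := by linarith [ht.2]
  field_simp
end
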